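/- arXiv:2105.09989 — 2 statements merged into one kernel-verified Lean document; each statement's English description precedes it below -/
import Mathlib

section
/- Let L be a loss function over X that is unambiguous and multi-group compatible. Then there exists a function f : X × [0,1] → [0,1] such that L is f-proper. -/
open scoped ENNReal
open scoped Classical

noncomputable section

namespace MultiPAC

variable {X : Type*}

def Supp (D : PMF (X × Bool)) : Set X := {x | ∃ y, D (x, y) ≠ 0}

structure LossFunction (X : Type*) where
  loss : PMF (X × Bool) → (X → unitInterval) → unitInterval
  locality : ∀ (D : PMF (X × Bool)) (h h' : X → unitInterval),
    (∀ x ∈ Supp D, h x = h' x) → loss D h = loss D h'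

def condOn (D : PMF (X × Bool)) (g : Set X) (hg : ∃ z : X × Bool, z.1 ∈ g ∧ D z ≠ 0) :
    PMF (X × Bool) :=
  D.filter {z | z.1 ∈ g} hg

def empDist {m : ℕ} (hm : m ≠ 0) (S : Fin m → X × Bool) : PMF (X × Bool) :=
  haveI : NeZero m := ⟨hm⟩
  (PMF.uniformOfFintype (Fin m)).map S

def iidProb {α : Type*} {m : ℕ} (D : PMF α) (E : Set (Fin m → α)) : ℝ≥0∞ :=
  ∑' S : Fin m → α, E.indicator (fun T => ∏ i, D (T i)) S

/-- Boundedness by a polynomial in `1/ε`, `1/δ` and `log k`. -/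
def PolyBound3 (M : ℝ → ℝ → ℕ → ℕ) : Prop :=
  ∃ (C : ℝ) (n : ℕ), ∀ ε δ : ℝ, ε ∈ Set.Ioo (0:ℝ) 1 → δ ∈ Set.Ioo (0:ℝ) 1 → ∀ k : ℕ,
    (M ε δ k : ℝ) ≤ C * (1/ε + 1/δ + Real.log k + 1) ^ n

/-- `L` has the uniform convergence property with sample-complexity function `M`. -/
def UniformConvergenceWith (L : LossFunction X) (M : ℝ → ℝ → ℕ → ℕ) : Prop :=
  ∀ (H : Finset (X → unitInterval)) (ε δ : ℝ), ε ∈ Set.Ioo (0:ℝ) 1 → δ ∈ Set.Ioo (0:ℝ) 1 →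
    ∀ (D : PMF (X × Bool)) (m : ℕ) (hm : m ≠ 0), M ε δ H.card ≤ m →
      1 - ENNReal.ofReal δ ≤ iidProb D {S : Fin m → X × Bool |
        ∀ h ∈ H, |(L.loss (empDist hm S) h : ℝ) - (L.loss D h : ℝ)| ≤ ε}

/-- `L` has the uniform convergence property (w.r.t. finite classes). -/
def UniformConvergence (L : LossFunction X) : Prop :=
  ∃ M : ℝ → ℝ → ℕ → ℕ, PolyBound3 M ∧ UniformConvergenceWith L M

/-- `L` is unambiguous: on every distribution supported on a single point `x` there is a
unique value `v` such that every predictor taking value `v` at `x` minimizes the loss. -/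
def Unambiguous (L : LossFunction X) : Prop :=
  ∀ (D : PMF (X × Bool)) (x : X), Supp D = {x} →
    ∃! v : unitInterval, ∀ h : X → unitInterval, h x = v →
      ∀ h' : X → unitInterval, L.loss D h ≤ L.loss D h'

/-- `L` is multi-group compatible. -/
def MultiGroupCompatible (L : LossFunction X) : Prop :=
  ∀ (D : PMF (X × Bool)) (H : Set (X → unitInterval)) (G : Set (Set X)),
    ∃ hstar : X → unitInterval, ∀ g ∈ G, ∀ (hg : ∃ z : X × Bool, z.1 ∈ g ∧ D z ≠ 0),
      ∀ h' ∈ H, L.loss (condOn D g hg) hstar ≤ L.loss (condOn D g hg) h'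

/-- The probability mass that `D` puts on the event `x ∈ g`. -/
def groupMass (D : PMF (X × Bool)) (g : Set X) : ℝ≥0∞ := D.toOuterMeasure {z | z.1 ∈ g}

/-- The probability (over an i.i.d. size-`m` sample from `D` and the internal randomness of
the algorithm `A`) that the output predictor of `A` is in `Good`. -/
def algSuccess {m : ℕ} (D : PMF (X × Bool)) (A : (Fin m → X × Bool) → PMF (X → unitInterval))
    (Good : (X → unitInterval) → Prop) : ℝ≥0∞ :=
  ∑' S : Fin m → X × Bool, (∏ i, D (S i)) * (A S).toOuterMeasure {h | Good h}

/-- Boundedness by a polynomial in `1/ε`, `1/δ`, `1/γ`, `log s` and `log t`. -/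
def PolyBound5 (M : ℝ → ℝ → ℝ → ℕ → ℕ → ℕ) : Prop :=
  ∃ (C : ℝ) (n : ℕ), ∀ ε δ γ : ℝ, ε ∈ Set.Ioo (0:ℝ) 1 → δ ∈ Set.Ioo (0:ℝ) 1 →
    γ ∈ Set.Ioo (0:ℝ) 1 → ∀ s t : ℕ,
      (M ε δ γ s t : ℝ) ≤ C * (1/ε + 1/δ + 1/γ + Real.log s + Real.log t + 1) ^ n

/-- `L` is multi-group agnostic PAC learnable. -/
def MultiGroupLearnable (L : LossFunction X) : Prop :=
  ∃ (A : (m : ℕ) → (Fin m → X × Bool) → PMF (X → unitInterval))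
    (M : ℝ → ℝ → ℝ → ℕ → ℕ → ℕ), PolyBound5 M ∧
    ∀ (ε δ γ : ℝ), ε ∈ Set.Ioo (0:ℝ) 1 → δ ∈ Set.Ioo (0:ℝ) 1 → γ ∈ Set.Ioo (0:ℝ) 1 →
    ∀ (H : Finset (X → unitInterval)) (G : Finset (Set X)) (D : PMF (X × Bool)) (m : ℕ),
      M ε δ γ H.card G.card ≤ m →
      1 - ENNReal.ofReal δ ≤ algSuccess D (A m) (fun h =>
        ∀ g ∈ G, ENNReal.ofReal γ ≤ groupMass D g →
          ∀ (hg : ∃ z : X × Bool, z.1 ∈ g ∧ D z ≠ 0),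
          ∀ h' ∈ H, (L.loss (condOn D g hg) h : ℝ) ≤ (L.loss (condOn D g hg) h' : ℝ) + ε)

/-- `Pr_D[y = 1 ∣ X = x]`, as an element of `[0,1]`. -/
def condProb (D : PMF (X × Bool)) (x : X) : unitInterval :=
  ⟨(D (x, true)).toReal / ((D (x, true)).toReal + (D (x, false)).toReal), by
    constructor
    · positivity
    · rcases eq_or_lt_of_le (add_nonneg ENNReal.toReal_nonneg ENNReal.toReal_nonneg :
        (0:ℝ) ≤ (D (x, true)).toReal + (D (x, false)).toReal) with hz | hz
      · rw [← hz, div_zero]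
        exact zero_le_one
      · rw [div_le_one hz]
        exact le_add_of_nonneg_right ENNReal.toReal_nonneg⟩

/-- The predictor `h_D` : `h_D x = f (x, p_D x)` on the support of `D`, and `0` elsewhere. -/
def bayesPred (f : X × unitInterval → unitInterval) (D : PMF (X × Bool)) :
    X → unitInterval :=
  fun x => if x ∈ Supp D then f (x, condProb D x) else 0

/-- `L` is `f`-proper. -/
def FProper (f : X × unitInterval → unitInterval) (L : LossFunction X) : Prop :=
  ∀ (D : PMF (X × Bool)) (h : X → unitInterval), L.loss D (bayesPred f D) ≤ L.loss D h

/-!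
Apply multi-group compatibility to `D` with `H` all predictors and `G` consisting of `univ`
and all singletons: this gives one predictor `h⋆` that is optimal both on `D` and on every
`D_{x}`. A distribution concentrated at `x` is determined by its conditional probability, and
`D_{x}` has the same conditional probability `p_D(x)` as `D`, so unambiguity forces
`h⋆ x = f (x, p_D(x))` for an `f` that does not depend on `D`. By locality `h_D` has the same
loss on `D` as `h⋆`.
-/

def IsOptimalValueAt (L : LossFunction X) (D : PMF (X × Bool)) (x : X) (v : unitInterval) :
    Prop :=
  ∀ h : X → unitInterval, h x = v → ∀ h' : X → unitInterval, L.loss D h ≤ L.loss D h'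

/-- The `f` of the theorem. By `eq_of_supp_eq_singleton` at most one distribution qualifies,
so for an unambiguous loss this is its unique optimal value. -/
def optimalValue (L : LossFunction X) (x : X) (p : unitInterval) : unitInterval :=
  Classical.epsilon fun v => ∃ D, Supp D = {x} ∧ condProb D x = p ∧ IsOptimalValueAt L D x v

section PointDistribution

variable {D D₁ D₂ : PMF (X × Bool)} {x : X}

lemma apply_eq_zero_of_supp_eq_singleton (hD : Supp D = {x}) {x' : X} (hx' : x' ≠ x)
    (y : Bool) : D (x', y) = 0 := by
  by_contra hy
  exact hx' (hD ▸ ⟨y, hy⟩ : x' ∈ ({x} : Set X))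

lemma apply_false_add_apply_true_of_supp_eq_singleton (hD : Supp D = {x}) :
    D (x, false) + D (x, true) = 1 := by
  rw [← D.tsum_coe, ENNReal.tsum_prod', tsum_eq_single x, tsum_bool]
  intro x' hx'
  simp [apply_eq_zero_of_supp_eq_singleton hD hx']

lemma ofReal_condProb_of_supp_eq_singleton (hD : Supp D = {x}) :
    ENNReal.ofReal (condProb D x) = D (x, true) := by
  have hsum := apply_false_add_apply_true_of_supp_eq_singleton hD
  have hsum' : (D (x, true)).toReal + (D (x, false)).toReal = 1 := by
    rw [← ENNReal.toReal_add (D.apply_ne_top _) (D.apply_ne_top _), add_comm, hsum,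
      ENNReal.toReal_one]
  change ENNReal.ofReal ((D (x, true)).toReal / _) = _
  rw [hsum', div_one, ENNReal.ofReal_toReal (D.apply_ne_top _)]

lemma eq_of_supp_eq_singleton (hD₁ : Supp D₁ = {x}) (hD₂ : Supp D₂ = {x})
    (hp : condProb D₁ x = condProb D₂ x) : D₁ = D₂ := by
  have htrue : D₁ (x, true) = D₂ (x, true) := by
    rw [← ofReal_condProb_of_supp_eq_singleton hD₁, ← ofReal_condProb_of_supp_eq_singleton hD₂,
      hp]
  have hfalse : D₁ (x, false) = D₂ (x, false) := by
    rw [ENNReal.eq_sub_of_add_eq (D₁.apply_ne_top _)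
        (apply_false_add_apply_true_of_supp_eq_singleton hD₁),
      ENNReal.eq_sub_of_add_eq (D₂.apply_ne_top _)
        (apply_false_add_apply_true_of_supp_eq_singleton hD₂), htrue]
  ext ⟨x', y⟩
  by_cases hx' : x' = x
  · subst hx'
    cases y
    exacts [hfalse, htrue]
  · rw [apply_eq_zero_of_supp_eq_singleton hD₁ hx', apply_eq_zero_of_supp_eq_singleton hD₂ hx']

end PointDistribution

section Conditioning

variable (D : PMF (X × Bool))

lemma condOn_univ (hg : ∃ z : X × Bool, z.1 ∈ Set.univ ∧ D z ≠ 0) :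
    condOn D Set.univ hg = D := by
  ext z
  simp [condOn]

variable {g : Set X} (hg : ∃ z : X × Bool, z.1 ∈ g ∧ D z ≠ 0)

lemma condOn_apply_ne_zero_iff (z : X × Bool) : condOn D g hg z ≠ 0 ↔ z.1 ∈ g ∧ D z ≠ 0 :=
  PMF.filter_apply_ne_zero_iff (p := D) (s := {z : X × Bool | z.1 ∈ g}) hg z

lemma supp_condOn : Supp (condOn D g hg) = Supp D ∩ g := by
  ext x
  simp only [Supp, Set.mem_ofPred_eq, Set.mem_inter_iff, condOn_apply_ne_zero_iff]
  tauto

lemma condProb_condOn {x : X} (hx : x ∈ g) : condProb (condOn D g hg) x = condProb D x := by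
  set T := ∑' z, {z : X × Bool | z.1 ∈ g}.indicator D z
  have hT : T⁻¹.toReal ≠ 0 := by
    obtain ⟨z, hzg, hz⟩ := hg
    refine ENNReal.toReal_ne_zero.mpr ⟨ENNReal.inv_ne_zero.mpr (D.tsum_coe_indicator_ne_top _),
      ENNReal.inv_ne_top.mpr fun hT0 => hz ?_⟩
    simpa [hzg] using ENNReal.tsum_eq_zero.mp hT0 z
  have happly : ∀ y, condOn D g hg (x, y) = D (x, y) * T⁻¹ := fun y => by
    rw [condOn, PMF.filter_apply (p := D) (s := {z : X × Bool | z.1 ∈ g}) hg,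
      Set.indicator_of_mem (show (x, y) ∈ {z : X × Bool | z.1 ∈ g} from hx)]
  apply Subtype.ext
  change (condOn D g hg (x, true)).toReal /
      ((condOn D g hg (x, true)).toReal + (condOn D g hg (x, false)).toReal) =
    (D (x, true)).toReal / ((D (x, true)).toReal + (D (x, false)).toReal)
  rw [happly, happly, ENNReal.toReal_mul, ENNReal.toReal_mul, ← add_mul]
  exact mul_div_mul_right _ _ hT

end Conditioning

lemma isOptimalValueAt_of_forall_le {L : LossFunction X} {D : PMF (X × Bool)} {x : X}
    (hD : Supp D = {x}) {hstar : X → unitInterval}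
    (hmin : ∀ h' : X → unitInterval, L.loss D hstar ≤ L.loss D h') :
    IsOptimalValueAt L D x (hstar x) := by
  intro h hx h'
  rw [L.locality D h hstar fun x' hx' => by rw [hD, Set.mem_singleton_iff] at hx'; rw [hx', hx]]
  exact hmin h'

lemma optimalValue_eq {L : LossFunction X} (hL : Unambiguous L) {D : PMF (X × Bool)} {x : X}
    (hD : Supp D = {x}) {v : unitInterval} (hv : IsOptimalValueAt L D x v) :
    optimalValue L x (condProb D x) = v := by
  have hex : ∃ w, ∃ D', Supp D' = {x} ∧ condProb D' x = condProb D x ∧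
      IsOptimalValueAt L D' x w := ⟨v, D, hD, rfl, hv⟩
  obtain ⟨D', hD', hp, hv'⟩ := Classical.epsilon_spec hex
  rw [eq_of_supp_eq_singleton hD' hD hp] at hv'
  exact (hL D x hD).unique hv' hv

theorem compatible_implies_fproper_general {X : Type*} (L : LossFunction X)
    (hUnamb : Unambiguous L) (hComp : MultiGroupCompatible L) :
    ∃ f : X × unitInterval → unitInterval, FProper f L := by
  refine ⟨fun q => optimalValue L q.1 q.2, fun D h => ?_⟩
  obtain ⟨hstar, hopt⟩ :=
    hComp D Set.univ (insert Set.univ (Set.range fun x : X => ({x} : Set X)))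
  have hglobal : ∀ h', L.loss D hstar ≤ L.loss D h' := fun h' => by
    obtain ⟨z, hz⟩ := D.support_nonempty
    simpa only [condOn_univ] using
      hopt Set.univ (Set.mem_insert _ _) ⟨z, trivial, hz⟩ h' trivial
  have hagree : ∀ x ∈ Supp D, bayesPred (fun q => optimalValue L q.1 q.2) D x = hstar x := by
    intro x hx
    have hg : ∃ z : X × Bool, z.1 ∈ ({x} : Set X) ∧ D z ≠ 0 :=
      let ⟨y, hy⟩ := hx; ⟨(x, y), rfl, hy⟩
    have hsupp : Supp (condOn D {x} hg) = {x} := by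
      rw [supp_condOn, Set.inter_eq_right.mpr (Set.singleton_subset_iff.mpr hx)]
    rw [bayesPred, if_pos hx, ← condProb_condOn D hg rfl]
    exact optimalValue_eq hUnamb hsupp <| isOptimalValueAt_of_forall_le hsupp fun h' =>
      hopt {x} (Set.mem_insert_of_mem _ (Set.mem_range_self x)) hg h' trivial
  calc L.loss D (bayesPred (fun q => optimalValue L q.1 q.2) D)
      = L.loss D hstar := L.locality D _ _ hagree
    _ ≤ L.loss D h := hglobal h

/-- If a loss function over a nonempty feature space `X` is unambiguous and
multi-group compatible, then there exists `f : X × [0,1] → [0,1]` such that `L` is `f`-proper. -/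
theorem compatible_implies_fproper {X : Type*} [Nonempty X] (L : LossFunction X)
    (hUnamb : Unambiguous L) (hComp : MultiGroupCompatible L) :
    ∃ f : X × unitInterval → unitInterval, FProper f L :=
  compatible_implies_fproper_general L hUnamb hComp

end MultiPAC
end
end

section
/- In the three-point instance, if ε > 0 satisfies ε < 7b/9, ε < b/2, and b/9 + ε < 16a/81, then there is no predictor h : X → [0,1] satisfying both L_{D_S}(h) ≤ b/9 + ε and L_{D_T}(h) ≤ ε. -/
open scoped ENNReal
open scoped Classical

noncomputable section

namespace MultiPAC

variable {X : Type*}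

/-- Probability of the event `E` for a pair drawn i.i.d. from `DX`. -/
def prPair {X : Type*} (DX : PMF X) (E : Set (X × X)) : ℝ≥0∞ :=
  ∑' p : X × X, E.indicator (fun q => DX q.1 * DX q.2) p

/-- The individual-fairness + accuracy loss:
`L_{D}(h) = a · Pr_{x,x' ~ D_X}[h x ≠ h x' ∧ d(x,x') = 0] + b · Pr_{(x,y) ~ D}[h x ≠ y]`,
where the binary metric `d` takes values in `{0,1}` encoded as `Bool` (`false` = 0). -/
def ifLoss (d : X × X → Bool) (a b : ℝ) (D : PMF (X × Bool)) (h : X → unitInterval) : ℝ :=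
  a * (prPair (D.map Prod.fst) {p : X × X | h p.1 ≠ h p.2 ∧ d p = false}).toReal +
    b * (D.toOuterMeasure {z : X × Bool | (h z.1 : ℝ) ≠ (if z.2 then 1 else 0)}).toReal

/-!
Write `x_S, x_T, x_ST` as `0, 1, 2`. Conditioned on `T`, both points have mass `1/2`, so
`L_{D_T}(h) ≤ ε < b/2` forces `h x_ST = 1`. Conditioned on `S`, the points `x_S` and `x_ST` have
masses `8/9` and `1/9` and are at distance `0`. If `h x_S = h x_ST = 1`, the accuracy term alone is
`8b/9 > b/9 + ε`; otherwise both ordered pairs `(x_S, x_ST)` and `(x_ST, x_S)` violate fairness,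
and the fairness term is at least `2 · a · (8/9) · (1/9) = 16a/81 > b/9 + ε`.
-/

lemma _root_.PMF.toOuterMeasure_apply_ne_top {α : Type*} (p : PMF α) (s : Set α) :
    p.toOuterMeasure s ≠ ⊤ :=
  p.toOuterMeasure_apply s ▸ p.tsum_coe_indicator_ne_top s

lemma _root_.PMF.apply_le_toOuterMeasure_apply {α : Type*} (p : PMF α) {s : Set α} {a : α}
    (ha : a ∈ s) : p a ≤ p.toOuterMeasure s :=
  p.toOuterMeasure_apply_singleton a ▸ MeasureTheory.measure_mono (Set.singleton_subset_iff.2 ha)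

lemma _root_.PMF.apply_le_map_apply {α β : Type*} (p : PMF α) (f : α → β) (a : α) :
    p a ≤ p.map f (f a) := by
  rw [PMF.map_apply]
  simpa using ENNReal.le_tsum (f := fun a' => if f a = f a' then p a' else 0) a

lemma prPair_le_one {α : Type*} (DX : PMF α) (E : Set (α × α)) : prPair DX E ≤ 1 :=
  calc prPair DX E ≤ ∑' q : α × α, DX q.1 * DX q.2 :=
        ENNReal.tsum_le_tsum fun q => Set.indicator_le_self _ _ q
    _ = 1 := by simp [ENNReal.tsum_prod', ENNReal.tsum_mul_left, DX.tsum_coe]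

lemma two_mul_le_prPair {α : Type*} (DX : PMF α) {E : Set (α × α)} {x y : α} (hxy : x ≠ y)
    (hE : (x, y) ∈ E) (hE' : (y, x) ∈ E) : 2 * (DX x * DX y) ≤ prPair DX E := by
  have hne : (x, y) ≠ (y, x) := by simp [hxy]
  calc 2 * (DX x * DX y) = ∑ q ∈ {(x, y), (y, x)}, E.indicator (fun q => DX q.1 * DX q.2) q := by
        rw [Finset.sum_pair hne, Set.indicator_of_mem hE, Set.indicator_of_mem hE', mul_comm (DX y),
          two_mul]
    _ ≤ prPair DX E := ENNReal.sum_le_tsum _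

lemma mul_apply_le_ifLoss (d : X × X → Bool) {a b : ℝ} (ha : 0 ≤ a) (hb : 0 ≤ b)
    (D : PMF (X × Bool)) {h : X → unitInterval} {z : X × Bool}
    (hz : (h z.1 : ℝ) ≠ (if z.2 then 1 else 0)) :
    b * (D z).toReal ≤ ifLoss d a b D h := by
  have hacc := ENNReal.toReal_mono (D.toOuterMeasure_apply_ne_top _)
    (D.apply_le_toOuterMeasure_apply (s := {z | (h z.1 : ℝ) ≠ (if z.2 then 1 else 0)}) hz)
  unfold ifLoss
  linarith [mul_le_mul_of_nonneg_left hacc hb, mul_nonneg ha (ENNReal.toReal_nonneg (a :=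
    prPair (D.map Prod.fst) {p : X × X | h p.1 ≠ h p.2 ∧ d p = false}))]

lemma two_mul_mul_apply_le_ifLoss {d : X × X → Bool} {a b : ℝ} (ha : 0 ≤ a) (hb : 0 ≤ b)
    (D : PMF (X × Bool)) {h : X → unitInterval} {z w : X × Bool} (hzw : z.1 ≠ w.1)
    (hh : h z.1 ≠ h w.1) (hd : d (z.1, w.1) = false) (hd' : d (w.1, z.1) = false) :
    2 * a * ((D z).toReal * (D w).toReal) ≤ ifLoss d a b D h := by
  set DX := D.map Prod.fst
  have hpair : 2 * (D z * D w) ≤ prPair DX {p : X × X | h p.1 ≠ h p.2 ∧ d p = false} :=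
    calc 2 * (D z * D w) ≤ 2 * (DX z.1 * DX w.1) := by
          gcongr <;> exact D.apply_le_map_apply Prod.fst _
      _ ≤ _ := two_mul_le_prPair DX (E := {p : X × X | h p.1 ≠ h p.2 ∧ d p = false}) hzw
          ⟨hh, hd⟩ ⟨Ne.symm hh, hd'⟩
  have hfair := ENNReal.toReal_mono (ne_top_of_le_ne_top ENNReal.one_ne_top (prPair_le_one _ _))
    hpair
  simp only [ENNReal.toReal_mul, ENNReal.toReal_ofNat] at hfair
  unfold ifLoss
  linarith [mul_le_mul_of_nonneg_left hfair ha, mul_nonneg hb (ENNReal.toReal_nonneg (a :=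
    D.toOuterMeasure {z : X × Bool | (h z.1 : ℝ) ≠ (if z.2 then 1 else 0)}))]

lemma condOn_apply_toReal [Fintype X] (D : PMF (X × Bool)) {g : Set X}
    (hg : ∃ z : X × Bool, z.1 ∈ g ∧ D z ≠ 0) {z : X × Bool} (hz : z.1 ∈ g) :
    (condOn D g hg z).toReal = (D z).toReal / ∑ w with w.1 ∈ g, (D w).toReal := by
  rw [condOn, PMF.filter_apply (s := {w : X × Bool | w.1 ∈ g}) (h := hg),
    Set.indicator_of_mem (show z ∈ {w : X × Bool | w.1 ∈ g} from hz), tsum_fintype,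
    ENNReal.toReal_mul, ENNReal.toReal_inv, ENNReal.toReal_sum fun w _ => ?_, Finset.sum_filter,
    div_eq_mul_inv]
  · congr 2
    refine Finset.sum_congr rfl fun w _ => ?_
    by_cases hw : w.1 ∈ g <;> simp [hw]
  · exact ne_top_of_le_ne_top (D.apply_ne_top w) (Set.indicator_le_self _ _ w)

theorem three_point_no_multi_pac_general (a b : ℝ) (ha : 0 < a) (hb : 0 < b)
    (d : Fin 3 × Fin 3 → Bool)
    (hd_symm : ∀ x y : Fin 3, d (x, y) = d (y, x))
    (hd02 : d (0, 2) = false)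
    (D : PMF (Fin 3 × Bool))
    (hD0 : D (0, false) = 8/10) (hD1 : D (1, true) = 1/10) (hD2 : D (2, true) = 1/10)
    (hD0' : D (0, true) = 0) (hD1' : D (1, false) = 0) (hD2' : D (2, false) = 0)
    (hS : ∃ z : Fin 3 × Bool, z.1 ∈ ({0, 2} : Set (Fin 3)) ∧ D z ≠ 0)
    (hT : ∃ z : Fin 3 × Bool, z.1 ∈ ({1, 2} : Set (Fin 3)) ∧ D z ≠ 0)
    (ε : ℝ) (hε2 : ε < b / 2)
    (hε3 : b / 9 + ε < 16 * a / 81) :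
    ¬ ∃ h : Fin 3 → unitInterval,
        ifLoss d a b (condOn D {0, 2} hS) h ≤ b / 9 + ε ∧
        ifLoss d a b (condOn D {1, 2} hT) h ≤ ε := by
  rintro ⟨h, hLS, hLT⟩
  have hS0 : (condOn D {0, 2} hS (0, false)).toReal = 8 / 9 := by
    rw [condOn_apply_toReal D hS (by simp)]
    simp [Finset.sum_filter, Fintype.sum_prod_type, Fin.sum_univ_three, hD0, hD0', hD2, hD2']
    norm_num
  have hS2 : (condOn D {0, 2} hS (2, true)).toReal = 1 / 9 := by
    rw [condOn_apply_toReal D hS (by simp)]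
    simp [Finset.sum_filter, Fintype.sum_prod_type, Fin.sum_univ_three, hD0, hD0', hD2, hD2']
    norm_num
  have hT2 : (condOn D {1, 2} hT (2, true)).toReal = 1 / 2 := by
    rw [condOn_apply_toReal D hT (by simp)]
    simp [Finset.sum_filter, Fintype.sum_prod_type, Fin.sum_univ_three, hD1, hD1', hD2, hD2']
    norm_num
  have h2 : (h 2 : ℝ) = 1 := by
    by_contra hne
    have := mul_apply_le_ifLoss d ha.le hb.le (condOn D {1, 2} hT) (z := (2, true)) hne
    rw [hT2] at this
    linarith
  by_cases h02 : h 0 = h 2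
  · have h0 : (h 0 : ℝ) ≠ 0 := by simp [h02, h2]
    have := mul_apply_le_ifLoss d ha.le hb.le (condOn D {0, 2} hS) (z := (0, false)) h0
    rw [hS0] at this
    linarith
  · have := two_mul_mul_apply_le_ifLoss ha.le hb.le (condOn D {0, 2} hS) (z := (0, false))
      (w := (2, true)) (by decide) h02 hd02 (hd_symm 2 0 ▸ hd02)
    rw [hS0, hS2] at this
    linarith

/-- In the three-point instance, if `ε > 0` satisfies `ε < 7b/9`, `ε < b/2`
and `b/9 + ε < 16a/81`, then no predictor `h : X → [0,1]` satisfies both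
`L_{D_S}(h) ≤ b/9 + ε` and `L_{D_T}(h) ≤ ε`. -/
theorem three_point_no_multi_pac (a b : ℝ) (ha : 0 < a) (hb : 0 < b)
    (d : Fin 3 × Fin 3 → Bool)
    (hd_refl : ∀ x : Fin 3, d (x, x) = false)
    (hd_symm : ∀ x y : Fin 3, d (x, y) = d (y, x))
    (hd02 : d (0, 2) = false) (hd01 : d (0, 1) = true) (hd12 : d (1, 2) = true)
    (D : PMF (Fin 3 × Bool))
    (hD0 : D (0, false) = 8/10) (hD1 : D (1, true) = 1/10) (hD2 : D (2, true) = 1/10)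
    (hD0' : D (0, true) = 0) (hD1' : D (1, false) = 0) (hD2' : D (2, false) = 0)
    (hS : ∃ z : Fin 3 × Bool, z.1 ∈ ({0, 2} : Set (Fin 3)) ∧ D z ≠ 0)
    (hT : ∃ z : Fin 3 × Bool, z.1 ∈ ({1, 2} : Set (Fin 3)) ∧ D z ≠ 0)
    (ε : ℝ) (hε : 0 < ε) (hε1 : ε < 7 * b / 9) (hε2 : ε < b / 2)
    (hε3 : b / 9 + ε < 16 * a / 81) :
    ¬ ∃ h : Fin 3 → unitInterval,
        ifLoss d a b (condOn D {0, 2} hS) h ≤ b / 9 + ε ∧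
        ifLoss d a b (condOn D {1, 2} hT) h ≤ ε :=
  three_point_no_multi_pac_general a b ha hb d hd_symm hd02 D hD0 hD1 hD2 hD0' hD1' hD2' hS hT ε hε2
    hε3

end MultiPAC
end
end
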